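/- Let G be a graph, σ a linear layout of G with mw(σ,G) ≤ k, and C a connected induced subgraph of G. Suppose there is an index i with 1 ≤ i < |V(G)| such that the bipartite cut graph G[Vᵢ, V̄ᵢ] contains an induced matching of size k all of whose edges have both endpoints at distance at least 2 in G from C. Then C lies entirely on one side of the cut: either every vertex x of C satisfies σ(x) ≤ i, or every vertex x of C satisfies σ(x) > i. -/

import Mathlib

/-!
If `C` met both sides of the cut, a walk in `C` between the two sides would cross it along an
edge `uv` of `C`. Every endpoint of the matching is at distance at least `2` from `C`, hence
neither equal nor adjacent to `u` or `v`, so adding `uv` to the matching yields an induced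
matching of size `k + 1` in the cut graph, contradicting `mw(σ, G) ≤ k`.
-/

open scoped Classical

noncomputable section

namespace LMW

variable {V : Type*} [Fintype V]

/-- The bipartite graph `G[Vᵢ, V̄ᵢ]` consisting of the edges of `G` crossing the cut at
position `i` of the linear layout `σ` (here `Vᵢ` is the set of the first `i` vertices
in the layout). -/
def cutGraph (G : SimpleGraph V) (σ : V ≃ Fin (Fintype.card V)) (i : ℕ) : SimpleGraph V where
  Adj u v := G.Adj u v ∧
    (((σ u : ℕ) < i ∧ i ≤ (σ v : ℕ)) ∨ ((σ v : ℕ) < i ∧ i ≤ (σ u : ℕ)))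
  symm := by
    constructor
    intro u v h
    exact ⟨h.1.symm, h.2.symm⟩
  loopless := by
    constructor
    intro u h
    exact G.irrefl h.1

/-- `M` is an induced matching in `H`: a set of edges of `H` such that any two distinct
edges of `M` share no endpoint and no endpoint of one is adjacent in `H` to an endpoint
of the other. -/
def IsInducedMatching (H : SimpleGraph V) (M : Finset (Sym2 V)) : Prop :=
  (↑M : Set (Sym2 V)) ⊆ H.edgeSet ∧
    ∀ e ∈ M, ∀ f ∈ M, e ≠ f → ∀ u ∈ e, ∀ v ∈ f, u ≠ v ∧ ¬ H.Adj u v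

/-- `mim H` is the size of a maximum induced matching of `H`. -/
def mim (H : SimpleGraph V) : ℕ :=
  sSup {n : ℕ | ∃ M : Finset (Sym2 V), IsInducedMatching H M ∧ M.card = n}

/-- The MIM-width of `G` under the linear layout `σ`: the maximum over all cuts
`1 ≤ i < |V|` of the size of a maximum induced matching of the cut graph. -/
def mw (G : SimpleGraph V) (σ : V ≃ Fin (Fintype.card V)) : ℕ :=
  (Finset.Ico 1 (Fintype.card V)).sup fun i => mim (cutGraph G σ i)

/-- The linear MIM-width of `G`: the minimum of `mw G σ` over all linear layouts `σ`. -/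
def lmw (G : SimpleGraph V) : ℕ :=
  sInf {m : ℕ | ∃ σ : V ≃ Fin (Fintype.card V), mw G σ = m}

end LMW

namespace SimpleGraph

variable {V : Type*} {G : SimpleGraph V}

theorem ne_and_not_adj_of_two_le_edist {u w : V} (h : 2 ≤ G.edist u w) :
    u ≠ w ∧ ¬G.Adj u w := by
  refine ⟨?_, fun hadj => ?_⟩
  · rintro rfl
    simp [edist_self] at h
  · rw [edist_eq_one_iff_adj.mpr hadj] at h
    norm_num at h

theorem exists_adj_boundary_of_preconnected_induce {C : Set V}
    (hC : (G.induce C).Preconnected) (S : Set V) {x y : V} (hxC : x ∈ C) (hyC : y ∈ C)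
    (hxS : x ∈ S) (hyS : y ∉ S) : ∃ u ∈ C, ∃ v ∈ C, G.Adj u v ∧ u ∈ S ∧ v ∉ S := by
  obtain ⟨p⟩ := hC ⟨x, hxC⟩ ⟨y, hyC⟩
  obtain ⟨d, -, hd₁, hd₂⟩ := p.exists_boundary_dart (Subtype.val ⁻¹' S) hxS hyS
  exact ⟨d.fst, d.fst.2, d.snd, d.snd.2, d.adj, hd₁, hd₂⟩

end SimpleGraph

namespace LMW

variable {V : Type*}

theorem IsInducedMatching.insert {H : SimpleGraph V} {M : Finset (Sym2 V)}
    (hM : IsInducedMatching H M) {e : Sym2 V} (he : e ∈ H.edgeSet)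
    (hsep : ∀ f ∈ M, ∀ q ∈ f, ∀ p ∈ e, q ≠ p ∧ ¬H.Adj q p) :
    IsInducedMatching H (insert e M) := by
  refine ⟨?_, ?_⟩
  · rw [Finset.coe_insert]
    exact Set.insert_subset he hM.1
  · intro f hf f' hf' hff' p hp q hq
    rw [Finset.mem_insert] at hf hf'
    rcases hf with rfl | hf <;> rcases hf' with rfl | hf'
    · exact absurd rfl hff'
    · obtain ⟨hne, hnadj⟩ := hsep f' hf' q hq p hp
      exact ⟨hne.symm, fun h => hnadj h.symm⟩
    · exact hsep f hf p hp q hq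
    · exact hM.2 f hf f' hf' hff' p hp q hq

variable [Fintype V]

theorem cutGraph_le (G : SimpleGraph V) (σ : V ≃ Fin (Fintype.card V)) (i : ℕ) :
    cutGraph G σ i ≤ G :=
  fun _ _ h => h.1

theorem mim_cutGraph_le_mw (G : SimpleGraph V) (σ : V ≃ Fin (Fintype.card V)) {i : ℕ}
    (hi₁ : 1 ≤ i) (hi₂ : i < Fintype.card V) : mim (cutGraph G σ i) ≤ mw G σ :=
  Finset.le_sup (f := fun j => mim (cutGraph G σ j)) (Finset.mem_Ico.mpr ⟨hi₁, hi₂⟩)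

namespace IsInducedMatching

variable {H : SimpleGraph V} {M : Finset (Sym2 V)}

theorem card_le_mim (hM : IsInducedMatching H M) : M.card ≤ mim H :=
  le_csSup ⟨Fintype.card (Sym2 V), by rintro n ⟨N, -, rfl⟩; exact N.card_le_univ⟩ ⟨M, hM, rfl⟩

theorem card_lt_mim (hM : IsInducedMatching H M) {e : Sym2 V} (he : e ∈ H.edgeSet)
    (hsep : ∀ f ∈ M, ∀ q ∈ f, ∀ p ∈ e, q ≠ p ∧ ¬H.Adj q p) : M.card < mim H := by
  have heM : e ∉ M := fun h => (hsep e h _ e.out_fst_mem _ e.out_fst_mem).1 rfl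
  have := (hM.insert he hsep).card_le_mim
  rwa [Finset.card_insert_of_notMem heM, Nat.add_one_le_iff] at this

end IsInducedMatching

/-- Suppose `mw G σ ≤ k`, `C` is a connected induced subgraph of `G`, and some cut
`(Vᵢ, V̄ᵢ)` of the layout admits an induced matching of size `k` all of whose endpoints are
at distance at least `2` in `G` from `C`.  Then `C` lies entirely on one side of the cut. -/
theorem connected_subgraph_one_side {V : Type*} [Fintype V] (G : SimpleGraph V)
    (σ : V ≃ Fin (Fintype.card V)) (k : ℕ) (hσ : mw G σ ≤ k)
    (C : Set V) (hC : (G.induce C).Connected)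
    (i : ℕ) (hi₁ : 1 ≤ i) (hi₂ : i < Fintype.card V)
    (M : Finset (Sym2 V)) (hM : IsInducedMatching (cutGraph G σ i) M) (hMcard : M.card = k)
    (hfar : ∀ e ∈ M, ∀ u ∈ e, ∀ w ∈ C, 2 ≤ G.edist u w) :
    (∀ x ∈ C, (σ x : ℕ) < i) ∨ (∀ x ∈ C, i ≤ (σ x : ℕ)) := by
  by_contra! hsplit
  obtain ⟨⟨x, hxC, hx⟩, ⟨y, hyC, hy⟩⟩ := hsplit
  obtain ⟨u, huC, v, hvC, huv, hu, hv⟩ :=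
    SimpleGraph.exists_adj_boundary_of_preconnected_induce hC.preconnected
      {w | (σ w : ℕ) < i} hyC hxC hy hx.not_gt
  have hsep : ∀ f ∈ M, ∀ q ∈ f, ∀ p ∈ s(u, v), q ≠ p ∧ ¬(cutGraph G σ i).Adj q p := by
    intro f hf q hq p hp
    have hpC : p ∈ C := by rcases Sym2.mem_iff.mp hp with rfl | rfl <;> assumption
    obtain ⟨hne, hnadj⟩ := SimpleGraph.ne_and_not_adj_of_two_le_edist (hfar f hf q hq p hpC)
    exact ⟨hne, fun h => hnadj (cutGraph_le G σ i h)⟩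
  have hcross : s(u, v) ∈ (cutGraph G σ i).edgeSet := ⟨huv, Or.inl ⟨hu, not_lt.mp hv⟩⟩
  have hlt := hM.card_lt_mim hcross hsep
  have hle := mim_cutGraph_le_mw G σ hi₁ hi₂
  omega

end LMW
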